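/- Let n ≥ 1 and let H ∈ ℂ[x,y] be a quasimonic polynomial of degree n+1 with principal homogeneous part Ĥ, satisfying ‖H − Ĥ‖ ≤ 1/(n√2). Then every critical value of H lies in the disk {|t| ≤ 3/n}: for every (x₀,y₀) ∈ ℂ² with H_x(x₀,y₀) = H_y(x₀,y₀) = 0 one has |H(x₀,y₀)| ≤ 3/n. -/

import Mathlib

open MvPolynomial Finset

/-- The ℓ¹-norm of a bivariate complex polynomial: the sum of the absolute
values of all its coefficients. -/
noncomputable def l1mv (p : MvPolynomial (Fin 2) ℂ) : ℝ :=
  ∑ m ∈ p.support, ‖MvPolynomial.coeff m p‖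

/-- A pair of homogeneous polynomials `a, b ∈ ℂ[x,y]` of degree `n` is
normalized if every homogeneous polynomial `f` of degree `2n - 1` can be
written `f = a·u + b·v` with homogeneous `u, v` of degree `n - 1` satisfying
`‖u‖ + ‖v‖ ≤ ‖f‖`. -/
def NormalizedPair (n : ℕ) (a b : MvPolynomial (Fin 2) ℂ) : Prop :=
  a.IsHomogeneous n ∧ b.IsHomogeneous n ∧
    ∀ f : MvPolynomial (Fin 2) ℂ, f.IsHomogeneous (2 * n - 1) →
      ∃ u v : MvPolynomial (Fin 2) ℂ, u.IsHomogeneous (n - 1) ∧ v.IsHomogeneous (n - 1) ∧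
        f = a * u + b * v ∧ l1mv u + l1mv v ≤ l1mv f

/-- A polynomial `H` of degree `n+1` is quasimonic (normalized at infinity) if
the pair of partial derivatives of its principal homogeneous part `Ĥ` is
normalized. -/
def Quasimonic (n : ℕ) (H : MvPolynomial (Fin 2) ℂ) : Prop :=
  NormalizedPair n (pderiv 0 (homogeneousComponent (n + 1) H))
    (pderiv 1 (homogeneousComponent (n + 1) H))

lemma degree_fin2 (m : Fin 2 →₀ ℕ) : m.degree = m 0 + m 1 := by
  rw [Finsupp.degree_apply, Finset.sum_subset (Finset.subset_univ m.support)
    (fun i _ hi => Finsupp.notMem_support_iff.mp hi), Fin.sum_univ_two]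

lemma homog_degree_eq {p : MvPolynomial (Fin 2) ℂ} {d : ℕ} (hp : p.IsHomogeneous d)
    {m : Fin 2 →₀ ℕ} (hm : MvPolynomial.coeff m p ≠ 0) : m.degree = d := by
  rw [Finsupp.degree_eq_weight_one]; exact hp hm

lemma sum_eq_degree (m : Fin 2 →₀ ℕ) : (m.sum fun _ e => e) = m.degree := rfl

lemma l1mv_nonneg (p : MvPolynomial (Fin 2) ℂ) : 0 ≤ l1mv p :=
  Finset.sum_nonneg fun _ _ => norm_nonneg _

lemma l1mv_monomial (m : Fin 2 →₀ ℕ) (c : ℂ) (hc : c ≠ 0) :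
    l1mv (monomial m c) = ‖c‖ := by
  classical
  rw [l1mv, support_monomial, if_neg hc, Finset.sum_singleton, coeff_monomial, if_pos rfl]

lemma abs_eval_le (p : MvPolynomial (Fin 2) ℂ) (d : ℕ) (hd : p.totalDegree ≤ d)
    (z : Fin 2 → ℂ) (M : ℝ) (hM : 1 ≤ M) (hz : ∀ j, ‖z j‖ ≤ M) :
    ‖eval z p‖ ≤ l1mv p * M ^ d := by
  have h0 : (0:ℝ) ≤ M := zero_le_one.trans hM
  rw [eval_eq, l1mv, Finset.sum_mul]
  refine (norm_sum_le _ _).trans (Finset.sum_le_sum fun m hm => ?_)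
  rw [norm_mul, norm_prod]
  have hdm : m.degree ≤ d := le_trans (le_of_eq (sum_eq_degree m).symm |>.trans
    (MvPolynomial.le_totalDegree hm)) hd
  calc ‖MvPolynomial.coeff m p‖ * ∏ i ∈ m.support, ‖z i ^ m i‖
      ≤ ‖MvPolynomial.coeff m p‖ * ∏ i ∈ m.support, M ^ m i := by
        refine mul_le_mul_of_nonneg_left (Finset.prod_le_prod
          (fun i _ => norm_nonneg _) fun i _ => ?_) (norm_nonneg _)
        rw [norm_pow]; exact pow_le_pow_left₀ (norm_nonneg _) (hz i) _
    _ = ‖MvPolynomial.coeff m p‖ * M ^ m.degree := by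
        rw [Finset.prod_pow_eq_pow_sum, Finsupp.degree_apply]
    _ ≤ ‖MvPolynomial.coeff m p‖ * M ^ d := by
        exact mul_le_mul_of_nonneg_left (pow_le_pow_right₀ hM hdm) (norm_nonneg _)

lemma abs_eval_homog_le (p : MvPolynomial (Fin 2) ℂ) (d : ℕ) (hp : p.IsHomogeneous d)
    (z : Fin 2 → ℂ) (r : ℝ) (hz : ∀ j, ‖z j‖ ≤ r) :
    ‖eval z p‖ ≤ l1mv p * r ^ d := by
  rw [eval_eq, l1mv, Finset.sum_mul]
  refine (norm_sum_le _ _).trans (Finset.sum_le_sum fun m hm => ?_)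
  rw [norm_mul, norm_prod]
  have hdm : m.degree = d := homog_degree_eq hp (mem_support_iff.mp hm)
  calc ‖MvPolynomial.coeff m p‖ * ∏ i ∈ m.support, ‖z i ^ m i‖
      ≤ ‖MvPolynomial.coeff m p‖ * ∏ i ∈ m.support, r ^ m i := by
        refine mul_le_mul_of_nonneg_left (Finset.prod_le_prod
          (fun i _ => norm_nonneg _) fun i _ => ?_) (norm_nonneg _)
        rw [norm_pow]; exact pow_le_pow_left₀ (norm_nonneg _) (hz i) _
    _ = ‖MvPolynomial.coeff m p‖ * r ^ d := by
        rw [Finset.prod_pow_eq_pow_sum, ← Finsupp.degree_apply, hdm]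

lemma abs_finsupp_prod_le (s : Fin 2 →₀ ℕ) (z : Fin 2 → ℂ) (M : ℝ) (hM : 1 ≤ M)
    (hz : ∀ j, ‖z j‖ ≤ M) :
    ‖s.prod fun n e => z n ^ e‖ ≤ M ^ s.degree := by
  rw [Finsupp.prod, norm_prod, Finsupp.degree_apply, ← Finset.prod_pow_eq_pow_sum]
  refine Finset.prod_le_prod (fun j _ => norm_nonneg _) fun j _ => ?_
  rw [norm_pow]
  exact pow_le_pow_left₀ (norm_nonneg _) (hz j) _

lemma degree_sub_single_le (m : Fin 2 →₀ ℕ) (i : Fin 2) (h : 0 < m i) :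
    (m - Finsupp.single i 1).degree + 1 ≤ m.degree := by
  obtain rfl | rfl : i = 0 ∨ i = 1 := by
    rcases Fin.exists_fin_two.mp ⟨i, rfl⟩ with _ | _ <;> [left; right] <;> assumption
  · have h0 : Finsupp.single (0 : Fin 2) 1 0 = 1 := Finsupp.single_eq_same
    have h1 : Finsupp.single (0 : Fin 2) 1 1 = 0 := Finsupp.single_eq_of_ne (by decide)
    rw [degree_fin2, degree_fin2, Finsupp.tsub_apply, Finsupp.tsub_apply, h0, h1]
    omega
  · have h0 : Finsupp.single (1 : Fin 2) 1 0 = 0 := Finsupp.single_eq_of_ne (by decide)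
    have h1 : Finsupp.single (1 : Fin 2) 1 1 = 1 := Finsupp.single_eq_same
    rw [degree_fin2, degree_fin2, Finsupp.tsub_apply, Finsupp.tsub_apply, h0, h1]
    omega

set_option maxHeartbeats 1000000 in
lemma abs_eval_pderiv_le (p : MvPolynomial (Fin 2) ℂ) (d : ℕ) (hd : p.totalDegree ≤ d)
    (z : Fin 2 → ℂ) (M : ℝ) (hM : 1 ≤ M) (hz : ∀ j, ‖z j‖ ≤ M) (i : Fin 2) :
    ‖eval z (pderiv i p)‖ ≤ d * l1mv p * M ^ (d - 1) := by
  have h0 : (0:ℝ) ≤ M := zero_le_one.trans hM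
  conv_lhs => rw [p.as_sum]
  rw [map_sum, map_sum]
  refine (norm_sum_le _ _).trans ?_
  rw [l1mv, Finset.mul_sum, Finset.sum_mul]
  refine Finset.sum_le_sum fun m hm => ?_
  have hdm : m.degree ≤ d := le_trans (le_of_eq (sum_eq_degree m).symm |>.trans
    (MvPolynomial.le_totalDegree hm)) hd
  rw [pderiv_monomial, eval_monomial]
  rcases Nat.eq_zero_or_pos (m i) with h | h
  · simp only [h, Nat.cast_zero, mul_zero, zero_mul, map_zero, norm_zero]
    positivity
  · rw [norm_mul, norm_mul, Complex.norm_natCast]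
    have hmi : (m i : ℝ) ≤ d := by
      exact_mod_cast le_trans (Finsupp.le_degree i m) hdm
    have hsub : (m - Finsupp.single i 1).degree ≤ d - 1 := by
      have := degree_sub_single_le m i h
      omega
    have hprod : ‖(m - Finsupp.single i 1).prod fun n e => z n ^ e‖
        ≤ M ^ (d - 1) :=
      (abs_finsupp_prod_le _ z M hM hz).trans (pow_le_pow_right₀ hM hsub)
    rw [mul_comm (d:ℝ) (‖MvPolynomial.coeff m p‖)]
    gcongr

lemma X_mul_pderiv_monomial (i : Fin 2) (m : Fin 2 →₀ ℕ) (c : ℂ) :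
    X i * pderiv i (monomial m c) = monomial m (c * (m i : ℂ)) := by
  rw [pderiv_monomial]
  rcases Nat.eq_zero_or_pos (m i) with h | h
  · simp [h]
  · rw [← pow_one (X i), X_pow_eq_monomial, monomial_mul, one_mul,
      add_tsub_cancel_of_le (Finsupp.single_le_iff.mpr h)]

lemma euler_fin2 (p : MvPolynomial (Fin 2) ℂ) (d : ℕ) (hp : p.IsHomogeneous d) :
    X 0 * pderiv 0 p + X 1 * pderiv 1 p = C (d : ℂ) * p := by
  conv_lhs => rw [p.as_sum]
  conv_rhs => rw [p.as_sum]
  rw [map_sum, map_sum, Finset.mul_sum, Finset.mul_sum, Finset.mul_sum,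
    ← Finset.sum_add_distrib]
  refine Finset.sum_congr rfl fun m hm => ?_
  rw [X_mul_pderiv_monomial, X_mul_pderiv_monomial, C_mul_monomial, ← map_add]
  have hdm : m 0 + m 1 = d := by
    rw [← degree_fin2]; exact homog_degree_eq hp (mem_support_iff.mp hm)
  congr 1
  rw [← hdm]
  push_cast
  ring

set_option maxHeartbeats 1000000 in
/-- almost-homogeneity implies close critical values.
If `H` is a quasimonic Hamiltonian of degree `n+1` with principal homogeneous
part `Ĥ` and `‖H − Ĥ‖ ≤ 1/(n√2)`, then every critical value of `H` lies in the
disk `{|t| ≤ 3/n}`. -/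
theorem stmt9 (n : ℕ) (hn : 1 ≤ n) (H : MvPolynomial (Fin 2) ℂ)
    (hdeg : H.totalDegree = n + 1) (hqm : Quasimonic n H)
    (hsmall : l1mv (H - homogeneousComponent (n + 1) H) ≤ 1 / (n * Real.sqrt 2))
    (x₀ y₀ : ℂ)
    (hcx : eval ![x₀, y₀] (pderiv 0 H) = 0)
    (hcy : eval ![x₀, y₀] (pderiv 1 H) = 0) :
    ‖eval ![x₀, y₀] H‖ ≤ 3 / n := by
  obtain ⟨k, rfl⟩ : ∃ k, n = k + 1 := ⟨n - 1, by omega⟩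
  set z : Fin 2 → ℂ := ![x₀, y₀] with hzdef
  set Hh := homogeneousComponent (k + 1 + 1) H with hHhdef
  set h : MvPolynomial (Fin 2) ℂ := H - Hh with hhdef
  have hHhhom : Hh.IsHomogeneous (k + 1 + 1) := homogeneousComponent_isHomogeneous _ _
  have hL : 0 ≤ l1mv h := l1mv_nonneg h
  have hs2 : (1:ℝ) ≤ Real.sqrt 2 := by
    rw [show (1:ℝ) = Real.sqrt 1 by simp]
    exact Real.sqrt_le_sqrt (by norm_num)
  have hsm : l1mv h * (((k:ℝ) + 1) * Real.sqrt 2) ≤ 1 := by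
    rw [← le_div_iff₀ (by positivity)]
    exact_mod_cast hsmall
  -- degree of the lower-order part
  have hdegh : h.totalDegree ≤ k + 1 := by
    unfold MvPolynomial.totalDegree
    refine Finset.sup_le fun m hm => ?_
    have hcm : MvPolynomial.coeff m h ≠ 0 := mem_support_iff.mp hm
    have hcH : MvPolynomial.coeff m H ≠ 0 := by
      intro h0
      apply hcm
      rw [hhdef, coeff_sub, hHhdef, coeff_homogeneousComponent, h0]
      simp
    have hne : m.degree ≠ k + 1 + 1 := by
      intro hdg
      apply hcm
      rw [hhdef, coeff_sub, hHhdef, coeff_homogeneousComponent, if_pos hdg, sub_self]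
    have hle : (m.sum fun _ e => e) ≤ k + 1 + 1 := by
      rw [← hdeg]
      exact MvPolynomial.le_totalDegree (mem_support_iff.mpr hcH)
    rw [sum_eq_degree] at hle ⊢
    omega
  -- critical point relations
  have key : ∀ i : Fin 2, eval z (pderiv i H) = 0 →
      eval z (pderiv i Hh) = - eval z (pderiv i h) := by
    intro i hi
    have hsp : pderiv i Hh = pderiv i H - pderiv i h := by
      rw [hhdef, map_sub]; ring
    rw [hsp, map_sub, hi, zero_sub]
  have hpx := key 0 hcx
  have hpy := key 1 hcy
  have hz0 : z 0 = x₀ := rfl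
  have hz1 : z 1 = y₀ := rfl
  set r : ℝ := max (‖x₀‖) (‖y₀‖) with hrdef
  have hr0 : 0 ≤ r := le_trans (norm_nonneg x₀) (le_max_left _ _)
  have hzr : ∀ j, ‖z j‖ ≤ r := by
    intro j
    fin_cases j
    · exact le_max_left _ _
    · exact le_max_right _ _
  -- Step 1: r ≤ 1
  have hr1 : r ≤ 1 := by
    by_contra hcon
    push_neg at hcon
    have hrpos : (0:ℝ) < r := lt_trans zero_lt_one hcon
    have hzM : ∀ j, ‖z j‖ ≤ r := hzr
    have hpd : ∀ i : Fin 2, ‖eval z (pderiv i h)‖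
        ≤ ((k:ℝ) + 1) * l1mv h * r ^ k := by
      intro i
      have := abs_eval_pderiv_le h (k + 1) hdegh z r hcon.le hzM i
      push_cast at this
      simpa using this
    obtain ⟨i₀, hi₀⟩ : ∃ i₀ : Fin 2, ‖z i₀‖ = r := by
      rcases max_cases (‖x₀‖) (‖y₀‖) with ⟨he, _⟩ | ⟨he, _⟩
      · exact ⟨0, he.symm⟩
      · exact ⟨1, he.symm⟩
    have hfhom : (X i₀ ^ (2 * (k + 1) - 1) : MvPolynomial (Fin 2) ℂ).IsHomogeneous
        (2 * (k + 1) - 1) := by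
      simpa using (isHomogeneous_X ℂ i₀).pow (2 * (k + 1) - 1)
    obtain ⟨ha, hb, hmain⟩ := hqm
    obtain ⟨u, v, hu, hv, hf, huv⟩ := hmain _ hfhom
    have hlf : l1mv (X i₀ ^ (2 * (k + 1) - 1) : MvPolynomial (Fin 2) ℂ) = 1 := by
      rw [X_pow_eq_monomial, l1mv_monomial _ _ one_ne_zero, norm_one]
    have hef : ‖eval z (X i₀ ^ (2 * (k + 1) - 1))‖ = r ^ (2 * (k + 1) - 1) := by
      rw [map_pow, eval_X, norm_pow, hi₀]
    have hue : ‖eval z u‖ ≤ l1mv u * r ^ k := by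
      simpa using abs_eval_homog_le u (k + 1 - 1) hu z r hzr
    have hve : ‖eval z v‖ ≤ l1mv v * r ^ k := by
      simpa using abs_eval_homog_le v (k + 1 - 1) hv z r hzr
    have hbound : r ^ (2 * (k + 1) - 1)
        ≤ ((k:ℝ) + 1) * l1mv h * r ^ k * (l1mv u * r ^ k)
          + ((k:ℝ) + 1) * l1mv h * r ^ k * (l1mv v * r ^ k) := by
      rw [← hef, hf, map_add, map_mul, map_mul, hpx, hpy]
      refine (norm_add_le _ _).trans ?_
      rw [norm_mul, norm_mul, norm_neg, norm_neg]
      exact add_le_add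
        (mul_le_mul (hpd 0) hue (norm_nonneg _)
          (mul_nonneg (mul_nonneg (by positivity) hL) (pow_nonneg hr0 _)))
        (mul_le_mul (hpd 1) hve (norm_nonneg _)
          (mul_nonneg (mul_nonneg (by positivity) hL) (pow_nonneg hr0 _)))
    have huv1 : l1mv u + l1mv v ≤ 1 := by rw [← hlf]; exact huv
    have hpow : r ^ (2 * (k + 1) - 1) = r ^ k * r ^ k * r := by
      rw [← pow_add, ← pow_succ]
      congr 1
      omega
    have hkL : ((k:ℝ) + 1) * l1mv h ≤ 1 := by
      nlinarith [mul_nonneg (mul_nonneg (by positivity : (0:ℝ) ≤ (k:ℝ) + 1) hL)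
        (sub_nonneg.mpr hs2)]
    have hrk : (0:ℝ) < r ^ k * r ^ k := by positivity
    rw [hpow] at hbound
    have h3 : ((k:ℝ) + 1) * l1mv h * (l1mv u + l1mv v) ≤ 1 := by
      calc ((k:ℝ) + 1) * l1mv h * (l1mv u + l1mv v) ≤ 1 * 1 :=
            mul_le_mul hkL huv1 (add_nonneg (l1mv_nonneg u) (l1mv_nonneg v)) zero_le_one
        _ = 1 := by ring
    have h4 : r ^ k * r ^ k * r ≤ r ^ k * r ^ k * 1 := by
      calc r ^ k * r ^ k * r ≤ _ := hbound
        _ = (((k:ℝ) + 1) * l1mv h * (l1mv u + l1mv v)) * (r ^ k * r ^ k) := by ring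
        _ ≤ 1 * (r ^ k * r ^ k) := mul_le_mul_of_nonneg_right h3 hrk.le
        _ = r ^ k * r ^ k * 1 := by ring
    have h5 := le_of_mul_le_mul_left h4 hrk
    linarith
  -- Step 2: conclude
  have hz1' : ∀ j, ‖z j‖ ≤ 1 := fun j => (hzr j).trans hr1
  have hpd1 : ∀ i : Fin 2, ‖eval z (pderiv i h)‖ ≤ ((k:ℝ) + 1) * l1mv h := by
    intro i
    have := abs_eval_pderiv_le h (k + 1) hdegh z 1 le_rfl hz1' i
    push_cast at this
    simpa using this
  have heuler := congrArg (eval z) (euler_fin2 Hh (k + 1 + 1) hHhhom)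
  simp only [map_add, map_mul, eval_X, eval_C] at heuler
  rw [hpx, hpy] at heuler
  have hAbs : ((k:ℝ) + 2) * ‖eval z Hh‖ ≤ 2 * (((k:ℝ) + 1) * l1mv h) := by
    have h1 := congrArg (‖·‖) heuler
    rw [norm_mul, Complex.norm_natCast] at h1
    have h2 : (↑(k + 1 + 1) : ℝ) = (k:ℝ) + 2 := by push_cast; ring
    rw [h2] at h1
    rw [← h1]
    calc ‖z 0 * -eval z (pderiv 0 h) + z 1 * -eval z (pderiv 1 h)‖
        ≤ ‖z 0 * -eval z (pderiv 0 h)‖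
          + ‖z 1 * -eval z (pderiv 1 h)‖ := norm_add_le _ _
      _ = ‖z 0‖ * ‖eval z (pderiv 0 h)‖
          + ‖z 1‖ * ‖eval z (pderiv 1 h)‖ := by
          rw [norm_mul, norm_mul, norm_neg, norm_neg]
      _ ≤ 1 * (((k:ℝ) + 1) * l1mv h) + 1 * (((k:ℝ) + 1) * l1mv h) := by
          exact add_le_add (mul_le_mul (hz1' 0) (hpd1 0) (norm_nonneg _) zero_le_one)
            (mul_le_mul (hz1' 1) (hpd1 1) (norm_nonneg _) zero_le_one)
      _ = 2 * (((k:ℝ) + 1) * l1mv h) := by ring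
  have hB : ‖eval z h‖ ≤ l1mv h := by
    have := abs_eval_le h (k + 1) hdegh z 1 le_rfl hz1'
    simpa using this
  have hsplit : eval z H = eval z Hh + eval z h := by
    rw [hhdef, map_sub]; ring
  have hsum : ‖eval z H‖ ≤ ‖eval z Hh‖ + ‖eval z h‖ := by
    rw [hsplit]; exact norm_add_le _ _
  rw [show ((3:ℝ) / ↑(k + 1)) = 3 / ((k:ℝ) + 1) by push_cast; ring,
    le_div_iff₀ (by positivity : (0:ℝ) < (k:ℝ) + 1)]
  nlinarith [norm_nonneg (eval z Hh), norm_nonneg (eval z h),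
    norm_nonneg (eval z H), hB, hAbs, hsum, hsm, hL, hs2,
    mul_nonneg (mul_nonneg (by positivity : (0:ℝ) ≤ (k:ℝ) + 1) hL) (sub_nonneg.mpr hs2)]
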